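/- For all x ≥ 3, 1 < (3Γ(x/3+7/3)/(2Γ(x/3+2)))^{1/2} · (Γ(x/2+1)/Γ(x/2+3/2)) · ((x+1)/3)^{1/3} ≤ 3^{7/6}·√(π·Γ(10/3))/2^{10/3} ≈ 1.05599, with the maximum attained at x = 3. -/

import Mathlib

/-- The function appearing in the second technical lemma. -/
noncomputable def g11 (x : ℝ) : ℝ :=
  Real.sqrt (3 * Real.Gamma (x/3 + 7/3) / (2 * Real.Gamma (x/3 + 2)))
    * (Real.Gamma (x/2 + 1) / Real.Gamma (x/2 + 3/2))
    * ((x + 1) / 3) ^ ((1:ℝ)/3)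

/-! Write ψ = (log Γ)'. Convexity of log Γ and ψ(a + 1) = ψ(a) + 1/a give
log(a - 1) ≤ ψ(a) ≤ log a, hence ψ(a + s) - ψ(a) → 0; comparing the telescoping
differences ψ(a + s) - ψ(a) - (ψ(a + 1 + s) - ψ(a + 1)) = 1/a - 1/(a + s) with those of
explicit rational functions then bounds ψ(a + 1/3) - ψ(a) above and ψ(a + 1/2) - ψ(a) below,
accurately enough to make `(log g11)'` negative on `[3, ∞)`. So `log g11` is strictly
decreasing there and the maximum is `g11 3`. Log-convexity of Γ also bounds `log g11`
below by a combination of logarithms that tends to `0`, so `log g11 > 0` on `[3, ∞)`. -/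

open Real Set Filter Topology

lemma nonpos_of_tendsto_of_le_add_one {D : ℝ → ℝ} {a : ℝ} (hD : Tendsto D atTop (𝓝 0))
    (hstep : ∀ b ≥ a, D b ≤ D (b + 1)) : D a ≤ 0 := by
  have hmono : Monotone fun n : ℕ => D (a + n) := by
    refine monotone_nat_of_le_succ fun n => ?_
    have := hstep (a + n) (by simp)
    simpa [add_assoc] using this
  simpa using hmono.ge_of_tendsto
    (hD.comp (tendsto_atTop_add_const_left _ a tendsto_natCast_atTop_atTop)) 0

namespace Real

noncomputable def digamma (x : ℝ) : ℝ := deriv (log ∘ Gamma) x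

variable {x : ℝ}

lemma differentiableAt_log_Gamma (hx : 0 < x) : DifferentiableAt ℝ (log ∘ Gamma) x := by
  have hΓ : ∀ m : ℕ, x ≠ -m := fun m => by
    have := Nat.cast_nonneg (α := ℝ) m
    linarith
  exact (differentiableAt_Gamma hΓ).log (Gamma_ne_zero hΓ)

lemma hasDerivAt_log_Gamma (hx : 0 < x) : HasDerivAt (fun y => log (Gamma y)) (digamma x) x :=
  (differentiableAt_log_Gamma hx).hasDerivAt

lemma log_Gamma_add_one (hx : 0 < x) : log (Gamma (x + 1)) = log (Gamma x) + log x := by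
  rw [Gamma_add_one hx.ne', log_mul hx.ne' (Gamma_pos_of_pos hx).ne', add_comm]

lemma digamma_add_one (hx : 0 < x) : digamma (x + 1) = digamma x + 1 / x := by
  have hshift : (fun y => (log ∘ Gamma) (y + 1)) =ᶠ[𝓝 x] fun y => (log ∘ Gamma) y + log y := by
    filter_upwards [eventually_gt_nhds hx] with y hy using log_Gamma_add_one hy
  rw [digamma, ← deriv_comp_add_const, hshift.deriv_eq,
    deriv_fun_add (differentiableAt_log_Gamma hx) (differentiableAt_log hx.ne'), deriv_log, one_div]
  rfl

lemma hasDerivAt_log_Gamma_div_add {c d : ℝ} (h : 0 < x / c + d) :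
    HasDerivAt (fun y => log (Gamma (y / c + d))) (digamma (x / c + d) / c) x := by
  have := (hasDerivAt_log_Gamma h).comp x (((hasDerivAt_id x).div_const c).add_const d)
  simpa [div_eq_mul_inv, Function.comp_def] using this

lemma digamma_le_slope {a b : ℝ} (ha : 0 < a) (hab : a < b) :
    digamma a ≤ (log (Gamma b) - log (Gamma a)) / (b - a) := by
  have h := convexOn_log_Gamma.deriv_le_slope (mem_Ioi.mpr ha) (mem_Ioi.mpr (ha.trans hab)) hab
    (differentiableAt_log_Gamma ha)
  rwa [slope_def_field] at h

lemma slope_le_digamma {a b : ℝ} (ha : 0 < a) (hab : a < b) :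
    (log (Gamma b) - log (Gamma a)) / (b - a) ≤ digamma b := by
  have h := convexOn_log_Gamma.slope_le_deriv (mem_Ioi.mpr ha) (mem_Ioi.mpr (ha.trans hab)) hab
    (differentiableAt_log_Gamma (ha.trans hab))
  rwa [slope_def_field] at h

lemma monotoneOn_digamma : MonotoneOn digamma (Ioi 0) := by
  intro a ha b _ hab
  rcases hab.eq_or_lt with rfl | hab
  · rfl
  · exact (digamma_le_slope ha hab).trans (slope_le_digamma ha hab)

lemma digamma_le_log (hx : 0 < x) : digamma x ≤ log x := by
  simpa [log_Gamma_add_one hx] using digamma_le_slope hx (lt_add_one x)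

lemma log_sub_one_le_digamma (hx : 1 < x) : log (x - 1) ≤ digamma x := by
  have h := slope_le_digamma (sub_pos.mpr hx) (sub_one_lt x)
  have hrec := log_Gamma_add_one (sub_pos.mpr hx)
  rw [sub_add_cancel] at hrec
  rwa [hrec, sub_sub_cancel, div_one, add_sub_cancel_left] at h

lemma tendsto_digamma_add_sub_digamma {s : ℝ} (hs : 0 ≤ s) :
    Tendsto (fun x => digamma (x + s) - digamma x) atTop (𝓝 0) := by
  have hlog : Tendsto (fun x => log (x + s) - log (x - 1)) atTop (𝓝 0) := by
    have := (tendsto_log_comp_add_sub_log (1 + s)).comp (tendsto_atTop_add_const_right _ (-1)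
      tendsto_id)
    refine this.congr fun x => ?_
    simp only [Function.comp_apply, id]
    congr 2; ring
  refine squeeze_zero' ?_ ?_ hlog
  · filter_upwards [eventually_gt_atTop 0] with x hx
    exact sub_nonneg.mpr (monotoneOn_digamma hx (mem_Ioi.mpr (by linarith)) (by linarith))
  · filter_upwards [eventually_gt_atTop 1] with x hx
    exact sub_le_sub (digamma_le_log (by linarith)) (log_sub_one_le_digamma hx)

lemma log_Gamma_add_le {t : ℝ} (hx : 0 < x) (ht₀ : 0 ≤ t) (ht₁ : t ≤ 1) :
    log (Gamma (x + t)) ≤ log (Gamma x) + t * log x := by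
  have h := convexOn_log_Gamma.2 (mem_Ioi.mpr hx) (mem_Ioi.mpr (by linarith : 0 < x + 1))
    (sub_nonneg.mpr ht₁) ht₀ (sub_add_cancel 1 t)
  simp only [smul_eq_mul, Function.comp_apply, log_Gamma_add_one hx] at h
  rw [show (1 - t) * x + t * (x + 1) = x + t by ring] at h
  linarith

lemma digamma_add_third_sub_digamma_le {a : ℝ} (ha : 1 / 3 < a) :
    digamma (a + 1 / 3) - digamma a ≤ (1 / 3) / (a - 1 / 3) := by
  have hc : Tendsto (fun b : ℝ => (1 / 3) / (b - 1 / 3)) atTop (𝓝 0) :=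
    tendsto_const_nhds.div_atTop (tendsto_atTop_add_const_right _ _ tendsto_id)
  have h := nonpos_of_tendsto_of_le_add_one
    (D := fun b => digamma (b + 1 / 3) - digamma b - (1 / 3) / (b - 1 / 3)) (a := a)
    (by simpa using (tendsto_digamma_add_sub_digamma (by norm_num)).sub hc)
    fun b hb => by
      have hb0 : 0 < b := by linarith
      have hstep : 1 / b - 1 / (b + 1 / 3) ≤ (1 / 3) / (b - 1 / 3) - (1 / 3) / (b + 1 - 1 / 3) := by
        rw [div_sub_div _ _ (by positivity) (by positivity),
          div_sub_div _ _ (by linarith) (by linarith), div_le_div_iff₀ (by positivity)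
          (by nlinarith)]
        nlinarith
      simp only [add_right_comm b 1, digamma_add_one (by linarith : 0 < b + 1 / 3),
        digamma_add_one hb0]
      linarith
  simpa [sub_nonpos] using h

lemma le_digamma_add_half_sub_digamma {a : ℝ} (ha : 0 < a) :
    (1 / 2) / (a * (a + 1 / 2)) + (1 / 2) / (a + 1) ≤ digamma (a + 1 / 2) - digamma a := by
  have hc : Tendsto (fun b : ℝ => (1 / 2) / (b * (b + 1 / 2)) + (1 / 2) / (b + 1)) atTop (𝓝 0) := by
    have h₁ : Tendsto (fun b : ℝ => b + 1 / 2) atTop atTop :=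
      tendsto_atTop_add_const_right _ _ tendsto_id
    have h₂ : Tendsto (fun b : ℝ => b + 1) atTop atTop :=
      tendsto_atTop_add_const_right _ _ tendsto_id
    simpa using (tendsto_const_nhds.div_atTop (tendsto_id.atTop_mul_atTop₀ h₁)).add
      (tendsto_const_nhds.div_atTop h₂)
  have h := nonpos_of_tendsto_of_le_add_one
    (D := fun b => (1 / 2) / (b * (b + 1 / 2)) + (1 / 2) / (b + 1)
      - (digamma (b + 1 / 2) - digamma b)) (a := a)
    (by simpa using hc.sub (tendsto_digamma_add_sub_digamma (by norm_num)))
    fun b hb => by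
      have hb0 : 0 < b := by linarith
      have hstep : (1 / 2) / (b * (b + 1 / 2)) + (1 / 2) / (b + 1)
          - (1 / 2) / ((b + 1) * (b + 1 / 2 + 1)) - (1 / 2) / (b + 1 + 1)
          - (1 / b - 1 / (b + 1 / 2))
          = (1 / 2) / ((b + 1) * (b + 2)) - (1 / 2) / ((b + 1) * (b + 3 / 2)) := by
        field_simp
        ring
      have hle : (1 / 2) / ((b + 1) * (b + 2)) ≤ (1 / 2) / ((b + 1) * (b + 3 / 2)) := by
        gcongr
        linarith
      simp only [add_right_comm b 1, digamma_add_one (by linarith : 0 < b + 1 / 2),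
        digamma_add_one hb0]
      linarith
  simpa [sub_nonpos] using h

end Real

noncomputable def logG11 (x : ℝ) : ℝ :=
  (log 3 + log (Gamma (x / 3 + 7 / 3)) - log 2 - log (Gamma (x / 3 + 2))) / 2
    + (log (Gamma (x / 2 + 1)) - log (Gamma (x / 2 + 3 / 2))) + (log (x + 1) - log 3) / 3

lemma g11_eq_exp_logG11 {x : ℝ} (hx : -1 < x) : g11 x = exp (logG11 x) := by
  have hΓ : ∀ {y : ℝ}, 0 < y → 0 < Gamma y := Gamma_pos_of_pos
  have h₁ := hΓ (by linarith : 0 < x / 3 + 7 / 3)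
  have h₂ := hΓ (by linarith : 0 < x / 3 + 2)
  have h₃ := hΓ (by linarith : 0 < x / 2 + 1)
  have h₄ := hΓ (by linarith : 0 < x / 2 + 3 / 2)
  have hratio : Gamma (x / 2 + 1) / Gamma (x / 2 + 3 / 2)
      = exp (log (Gamma (x / 2 + 1)) - log (Gamma (x / 2 + 3 / 2))) := by
    rw [exp_sub, exp_log h₃, exp_log h₄]
  rw [g11, sqrt_eq_rpow, rpow_def_of_pos (by positivity), rpow_def_of_pos (by linarith), hratio,
    ← exp_add, ← exp_add, log_div (by positivity) (by positivity), log_mul (by norm_num) h₁.ne',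
    log_mul (by norm_num) h₂.ne', log_div (by linarith) (by norm_num), logG11]
  ring_nf

lemma hasDerivAt_logG11 {x : ℝ} (hx : -1 < x) :
    HasDerivAt logG11 ((digamma (x / 3 + 7 / 3) - digamma (x / 3 + 2)) / 6
      + (digamma (x / 2 + 1) - digamma (x / 2 + 3 / 2)) / 2 + 1 / (3 * (x + 1))) x := by
  have h₁ := hasDerivAt_log_Gamma_div_add (c := 3) (d := 7 / 3) (x := x) (by linarith)
  have h₂ := hasDerivAt_log_Gamma_div_add (c := 3) (d := 2) (x := x) (by linarith)
  have h₃ := hasDerivAt_log_Gamma_div_add (c := 2) (d := 1) (x := x) (by linarith)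
  have h₄ := hasDerivAt_log_Gamma_div_add (c := 2) (d := 3 / 2) (x := x) (by linarith)
  have h₅ := ((hasDerivAt_id x).add_const 1).log (by simp; linarith)
  have H := ((((h₁.const_add (log 3)).sub_const (log 2)).sub h₂).div_const 2).add (h₃.sub h₄)
    |>.add ((h₅.sub_const (log 3)).div_const 3)
  refine H.congr_deriv ?_
  simp only [id_eq]
  field_simp
  ring

lemma deriv_logG11_neg {x : ℝ} (hx : 3 ≤ x) : deriv logG11 x < 0 := by
  rw [(hasDerivAt_logG11 (by linarith)).deriv]
  have hthird := digamma_add_third_sub_digamma_le (a := x / 3 + 2) (by linarith)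
  have hhalf := le_digamma_add_half_sub_digamma (a := x / 2 + 1) (by linarith)
  rw [show x / 3 + 2 + 1 / 3 = x / 3 + 7 / 3 by ring] at hthird
  rw [show x / 2 + 1 + 1 / 2 = x / 2 + 3 / 2 by ring] at hhalf
  have hgap : ((1 / 2) / ((x / 2 + 1) * (x / 2 + 3 / 2)) + (1 / 2) / (x / 2 + 1 + 1)) / 2
      - ((1 / 3) / (x / 3 + 2 - 1 / 3) / 6 + 1 / (3 * (x + 1)))
      = (x ^ 3 + 6 * x ^ 2 - x - 54) / (6 * (x + 1) * (x + 2) * (x + 3) * (x + 4) * (x + 5)) := by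
    rw [show x / 3 + 2 - 1 / 3 = (x + 5) / 3 by ring]
    have : x + 1 ≠ 0 := by linarith
    have : x + 5 ≠ 0 := by linarith
    field_simp
    ring
  have hnum : 0 < x ^ 3 + 6 * x ^ 2 - x - 54 := by nlinarith
  have hrat : 0 < (x ^ 3 + 6 * x ^ 2 - x - 54)
      / (6 * (x + 1) * (x + 2) * (x + 3) * (x + 4) * (x + 5)) := by
    have : 0 < x + 1 := by linarith
    positivity
  linarith

lemma strictAntiOn_logG11 : StrictAntiOn logG11 (Ici 3) := by
  refine strictAntiOn_of_deriv_neg (convex_Ici 3)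
    (fun x hx => (hasDerivAt_logG11 (by linarith [mem_Ici.mp hx])).continuousAt.continuousWithinAt)
    fun x hx => ?_
  rw [interior_Ici, mem_Ioi] at hx
  exact deriv_logG11_neg hx.le

lemma log_combination_le_logG11 {x : ℝ} (hx : -1 < x) :
    (log (x + 4) - log x) / 6 - (log (x + 2) - log x) / 2 + (log (x + 1) - log x) / 3
      ≤ logG11 x := by
  have hthird := log_Gamma_add_le (x := x / 3 + 4 / 3) (t := 2 / 3) (by linarith) (by norm_num)
    (by norm_num)
  have hhalf := log_Gamma_add_le (x := x / 2 + 1) (t := 1 / 2) (by linarith) (by norm_num)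
    (by norm_num)
  have hrec := log_Gamma_add_one (x := x / 3 + 4 / 3) (by linarith)
  have hlog₁ : log (x / 3 + 4 / 3) = log (x + 4) - log 3 := by
    rw [show x / 3 + 4 / 3 = (x + 4) / 3 by ring, log_div (by linarith) (by norm_num)]
  have hlog₂ : log (x / 2 + 1) = log (x + 2) - log 2 := by
    rw [show x / 2 + 1 = (x + 2) / 2 by ring, log_div (by linarith) (by norm_num)]
  rw [show x / 3 + 4 / 3 + 2 / 3 = x / 3 + 2 by ring] at hthird
  rw [show x / 2 + 1 + 1 / 2 = x / 2 + 3 / 2 by ring] at hhalf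
  rw [show x / 3 + 4 / 3 + 1 = x / 3 + 7 / 3 by ring] at hrec
  rw [logG11]
  linarith

lemma logG11_pos {x : ℝ} (hx : 3 ≤ x) : 0 < logG11 x := by
  have hlim : Tendsto (fun u => (log (u + 4) - log u) / 6 - (log (u + 2) - log u) / 2
      + (log (u + 1) - log u) / 3) atTop (𝓝 0) := by
    simpa using (((tendsto_log_comp_add_sub_log 4).div_const 6).sub
      ((tendsto_log_comp_add_sub_log 2).div_const 2)).add
      ((tendsto_log_comp_add_sub_log 1).div_const 3)
  have hnonneg : 0 ≤ logG11 (x + 1) := by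
    refine le_of_tendsto hlim ?_
    filter_upwards [eventually_ge_atTop (x + 1)] with u hu
    exact (log_combination_le_logG11 (by linarith)).trans
      (strictAntiOn_logG11.antitoneOn (mem_Ici.mpr (by linarith)) (mem_Ici.mpr (by linarith)) hu)
  exact hnonneg.trans_lt (strictAntiOn_logG11 (mem_Ici.mpr hx) (mem_Ici.mpr (by linarith))
    (lt_add_one x))

lemma g11_three : g11 3 = (3 : ℝ) ^ (7 / 6 : ℝ) * √(π * Gamma (10 / 3)) / (2 : ℝ) ^ (10 / 3 : ℝ) := by
  have hΓ3 : Gamma 3 = 2 := by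
    rw [show (3 : ℝ) = 2 + 1 by norm_num, Gamma_add_one two_ne_zero, Gamma_two, mul_one]
  have hΓ52 : Gamma (5 / 2) = 3 / 4 * √π := by
    rw [show (5 / 2 : ℝ) = 1 / 2 + 1 + 1 by norm_num, Gamma_add_one (by norm_num),
      Gamma_add_one (by norm_num), Gamma_one_half_eq]
    ring
  have hp : ((2 : ℝ) ^ (1 / 3 : ℝ)) ^ 3 = 2 := by rw [← rpow_mul_natCast (by norm_num)]; norm_num
  have hq : ((3 : ℝ) ^ (1 / 6 : ℝ)) ^ 2 = 3 ^ (1 / 3 : ℝ) := by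
    rw [← rpow_mul_natCast (by norm_num)]; norm_num
  have hq3 : ((3 : ℝ) ^ (1 / 6 : ℝ)) ^ 3 = √3 := by
    rw [← rpow_mul_natCast (by norm_num), sqrt_eq_rpow]; norm_num
  have h4 : (4 : ℝ) ^ (1 / 3 : ℝ) = ((2 : ℝ) ^ (1 / 3 : ℝ)) ^ 2 := by
    rw [← rpow_mul_natCast (by norm_num), show (4 : ℝ) = 2 ^ (2 : ℝ) by norm_num,
      ← rpow_mul (by norm_num)]
    norm_num
  have h2 : (2 : ℝ) ^ (10 / 3 : ℝ) = 8 * (2 : ℝ) ^ (1 / 3 : ℝ) := by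
    rw [show (10 / 3 : ℝ) = 3 + 1 / 3 by norm_num, rpow_add (by norm_num)]
    norm_num
  have h3 : (3 : ℝ) ^ (7 / 6 : ℝ) = 3 * (3 : ℝ) ^ (1 / 6 : ℝ) := by
    rw [show (7 / 6 : ℝ) = 1 + 1 / 6 by norm_num, rpow_add (by norm_num), rpow_one]
  rw [g11, show (3 : ℝ) / 3 + 7 / 3 = 10 / 3 by norm_num, show (3 : ℝ) / 3 + 2 = 3 by norm_num,
    show (3 : ℝ) / 2 + 1 = 5 / 2 by norm_num, show (3 : ℝ) / 2 + 3 / 2 = 3 by norm_num,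
    show ((3 : ℝ) + 1) / 3 = 4 / 3 by norm_num, hΓ3, hΓ52, div_rpow (by norm_num) (by norm_num),
    h4, ← hq, h2, h3, sqrt_div' _ (by norm_num), sqrt_mul_self (by norm_num),
    sqrt_mul' _ (by positivity), ← hq3, sqrt_mul' _ (by positivity)]
  field_simp
  linear_combination 8 * hp

/-- For `x ≥ 3`:
`1 < (3Γ(x/3+7/3)/(2Γ(x/3+2)))^(1/2)·(Γ(x/2+1)/Γ(x/2+3/2))·((x+1)/3)^(1/3)
   ≤ 3^(7/6)√(πΓ(10/3))/2^(10/3)`, with the maximum attained at `x = 3`. -/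
theorem stmt11 :
    (∀ x : ℝ, 3 ≤ x → 1 < g11 x ∧
      g11 x ≤ (3:ℝ) ^ ((7:ℝ)/6) * Real.sqrt (Real.pi * Real.Gamma (10/3))
        / (2:ℝ) ^ ((10:ℝ)/3)) ∧
    g11 3 = (3:ℝ) ^ ((7:ℝ)/6) * Real.sqrt (Real.pi * Real.Gamma (10/3))
        / (2:ℝ) ^ ((10:ℝ)/3) := by
  refine ⟨fun x hx => ⟨?_, ?_⟩, g11_three⟩
  · rw [g11_eq_exp_logG11 (by linarith)]
    exact one_lt_exp_iff.mpr (logG11_pos hx)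
  · rw [← g11_three, g11_eq_exp_logG11 (by linarith), g11_eq_exp_logG11 (by norm_num)]
    exact exp_le_exp.mpr (strictAntiOn_logG11.antitoneOn (mem_Ici.mpr le_rfl) (mem_Ici.mpr hx) hx)
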